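/- Let Y ∈ ℝ, let f₁,…,f_K ∈ ℝ, let w₁,…,w_K ≥ 0 with Σ_{k=1}^K w_k = 1, and let f = Σ_{k=1}^K w_k f_k. Let B = [min{Y,f₁,…,f_K}, max{Y,f₁,…,f_K}] and l : ℝ × ℝ → ℝ be such that z ↦ l(Y,z) is twice differentiable with continuous second derivative on B, with m(Y) = inf_{z∈B} l''(Y,z) finite. Then Σ_{k=1}^K w_k l(Y,f_k) ≥ l(Y,Y) + l'(Y,Y)·(f − Y) + (m(Y)/2)·Σ_{k=1}^K w_k (f_k − Y)². -/

import Mathlib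

/-!
Subtracting `m/2 · (z - Y)²` from `z ↦ l(Y, z)` leaves a function whose second derivative
`l'' - m` is nonnegative on `B`, hence a convex function lying above its tangent line at `Y`.
This gives `l(Y, z) ≥ l(Y, Y) + l'(Y, Y)(z - Y) + m/2 · (z - Y)²` for every `z ∈ B`; averaging
over `z = f_k` with the weights `w_k` yields the bound.
-/

open Set

lemma ConvexOn.add_mul_sub_le_of_hasDerivWithinAt {S : Set ℝ} {f : ℝ → ℝ} {f' x y : ℝ}
    (hfc : ConvexOn ℝ S f) (hx : x ∈ S) (hy : y ∈ S) (hf' : HasDerivWithinAt f f' S x) :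
    f x + f' * (y - x) ≤ f y := by
  rcases lt_trichotomy y x with hyx | rfl | hxy
  · have h := hfc.slope_le_of_hasDerivWithinAt hy hx hyx hf'
    rw [slope_def_field, div_le_iff₀ (sub_pos.2 hyx)] at h
    linarith
  · simp
  · have h := hfc.le_slope_of_hasDerivWithinAt hx hy hxy hf'
    rw [slope_def_field, le_div_iff₀ (sub_pos.2 hxy)] at h
    linarith

lemma add_mul_sub_add_mul_sq_le_of_le_deriv2 {D : Set ℝ} (hD : Convex ℝ D)
    {g g' g'' : ℝ → ℝ} {m a z : ℝ}
    (hg : ∀ x ∈ D, HasDerivWithinAt g (g' x) D x)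
    (hg' : ∀ x ∈ D, HasDerivWithinAt g' (g'' x) D x)
    (hm : ∀ x ∈ D, m ≤ g'' x) (ha : a ∈ D) (hz : z ∈ D) :
    g a + g' a * (z - a) + m / 2 * (z - a) ^ 2 ≤ g z := by
  have hφ : ∀ x ∈ D, HasDerivWithinAt (fun x => g x - m / 2 * (x - a) ^ 2)
      (g' x - m * (x - a)) D x := fun x hx =>
    (hg x hx).sub <| (((hasDerivAt_id' x).sub_const a).fun_pow 2).const_mul (m / 2)
      |>.congr_deriv (by ring) |>.hasDerivWithinAt
  have hφ' : ∀ x ∈ D, HasDerivWithinAt (fun x => g' x - m * (x - a)) (g'' x - m) D x :=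
    fun x hx => (hg' x hx).sub <| ((hasDerivAt_id' x).sub_const a).const_mul m
      |>.congr_deriv (by ring) |>.hasDerivWithinAt
  have hconv : ConvexOn ℝ D fun x => g x - m / 2 * (x - a) ^ 2 :=
    convexOn_of_hasDerivWithinAt2_nonneg hD (fun x hx => (hφ x hx).continuousWithinAt)
      (fun x hx => (hφ x (interior_subset hx)).mono interior_subset)
      (fun x hx => (hφ' x (interior_subset hx)).mono interior_subset)
      (fun x hx => sub_nonneg.2 (hm x (interior_subset hx)))
  have htangent := hconv.add_mul_sub_le_of_hasDerivWithinAt ha hz (hφ a ha)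
  simp only [sub_self, ne_eq, OfNat.ofNat_ne_zero, not_false_eq_true, zero_pow, mul_zero,
    sub_zero] at htangent
  linarith

theorem weighted_expert_loss_lower_bound_general
    (K : ℕ) (Y : ℝ) (f : Fin K → ℝ) (w : Fin K → ℝ)
    (hw : ∀ k, 0 ≤ w k) (hw1 : ∑ k, w k = 1)
    (F : ℝ) (hF : F = ∑ k, w k * f k)
    (lo hi : ℝ)
    (hlo : IsLeast (insert Y (Set.range f)) lo)
    (hhi : IsGreatest (insert Y (Set.range f)) hi)
    (l : ℝ → ℝ → ℝ) (l1 l2 : ℝ → ℝ)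
    (hd1 : ∀ z ∈ Set.Icc lo hi, HasDerivWithinAt (l Y) (l1 z) (Set.Icc lo hi) z)
    (hd2 : ∀ z ∈ Set.Icc lo hi, HasDerivWithinAt l1 (l2 z) (Set.Icc lo hi) z)
    (mY : ℝ) (hmY : IsGLB (l2 '' Set.Icc lo hi) mY) :
    (∑ k, w k * l Y (f k)) ≥
      l Y Y + l1 Y * (F - Y) + (mY / 2) * ∑ k, w k * (f k - Y) ^ 2 := by
  have hB : ∀ x ∈ insert Y (range f), x ∈ Icc lo hi := fun x hx => ⟨hlo.2 hx, hhi.2 hx⟩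
  have htaylor : ∀ k, l Y Y + l1 Y * (f k - Y) + mY / 2 * (f k - Y) ^ 2 ≤ l Y (f k) :=
    fun k => add_mul_sub_add_mul_sq_le_of_le_deriv2 (convex_Icc lo hi) hd1 hd2
      (fun z hz => hmY.1 ⟨z, hz, rfl⟩) (hB Y (mem_insert _ _))
      (hB _ (mem_insert_of_mem _ ⟨k, rfl⟩))
  calc l Y Y + l1 Y * (F - Y) + mY / 2 * ∑ k, w k * (f k - Y) ^ 2
      = ∑ k, w k * (l Y Y + l1 Y * (f k - Y) + mY / 2 * (f k - Y) ^ 2) := by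
        simp only [hF, mul_add, mul_sub, Finset.sum_add_distrib, Finset.sum_sub_distrib,
          ← Finset.sum_mul, mul_left_comm (w _), ← Finset.mul_sum, hw1]
        ring
    _ ≤ ∑ k, w k * l Y (f k) :=
        Finset.sum_le_sum fun k _ => mul_le_mul_of_nonneg_left (htaylor k) (hw k)

/-- Lower bound on the weighted expert loss (intermediate step of the GAD proof). -/
theorem weighted_expert_loss_lower_bound
    (K : ℕ) (hK : 0 < K) (Y : ℝ) (f : Fin K → ℝ) (w : Fin K → ℝ)
    (hw : ∀ k, 0 ≤ w k) (hw1 : ∑ k, w k = 1)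
    (F : ℝ) (hF : F = ∑ k, w k * f k)
    (lo hi : ℝ)
    (hlo : IsLeast (insert Y (Set.range f)) lo)
    (hhi : IsGreatest (insert Y (Set.range f)) hi)
    (l : ℝ → ℝ → ℝ) (l1 l2 : ℝ → ℝ)
    (hd1 : ∀ z ∈ Set.Icc lo hi, HasDerivWithinAt (l Y) (l1 z) (Set.Icc lo hi) z)
    (hd2 : ∀ z ∈ Set.Icc lo hi, HasDerivWithinAt l1 (l2 z) (Set.Icc lo hi) z)
    (hcont : ContinuousOn l2 (Set.Icc lo hi))
    (mY : ℝ) (hmY : IsGLB (l2 '' Set.Icc lo hi) mY) :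
    (∑ k, w k * l Y (f k)) ≥
      l Y Y + l1 Y * (F - Y) + (mY / 2) * ∑ k, w k * (f k - Y) ^ 2 :=
  weighted_expert_loss_lower_bound_general K Y f w hw hw1 F hF lo hi hlo hhi l l1 l2 hd1 hd2 mY hmY
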